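/- Intermediate lower bound (23)–(24) in the proof of Theorem 2. Under the hypotheses of Theorem 2 (ψₙ† differentiable convex; ψ̄ₙ‡ β-strongly convex and B-smooth differentiable convex with 0 < β ≤ B < ∞ and differentiable conjugates ψₙ‡ with (1/β)-Lipschitz gradients and mutually inverse gradients; λ > 0; τ ≥ 1; Pₙ, P̂ Borel probability measures; αₙ > 0 with Σₙ αₙ = 1), the regularized objective M satisfies M ≥ Σₙ αₙ ∫ ψₙ‡ dPₙ + τ · ∫ [Σₙ αₙ ψ̄ₙ‡(y) − ‖y‖²/2]₊ dP̂(y) + Σₙ αₙ (λ − B/(2β²)) · ∫ ‖∇ψ̄ₙ‡(∇ψₙ†(x)) − x‖² dPₙ(x). -/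

import Mathlib

open MeasureTheory RealInnerProductSpace

/-!
Fix `x` and put `u = ∇ψdag x`, `y = ∇ψd x`. Since `∇ψbd y = x` and `ψbd` is convex, the
supremum defining the conjugate is attained at `y`: `ψd x = ⟪y, x⟫ - ψbd y`. Strong convexity
bounds `ψbd y` below by the tangent of `ψbd` at `u` plus `β/2 ‖y - u‖²`, so by Young's inequality
`ψd x - (⟪x, u⟫ - ψbd u) ≤ ⟪x - ∇ψbd u, y - u⟫ - β/2 ‖y - u‖² ≤ ‖∇ψbd u - x‖² / (2β)`,
and `1/(2β) ≤ B/(2β²)`. Integrating against `Pₙ` and summing with the weights `αₙ ≥ 0` gives the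
bound; the `τ`-term is the same on both sides.
-/

section Young

variable {E : Type*} [NormedAddCommGroup E] [InnerProductSpace ℝ E]

theorem inner_sub_half_mul_norm_sq_le {β : ℝ} (hβ : 0 < β) (v w : E) :
    ⟪v, w⟫ - β / 2 * ‖w‖ ^ 2 ≤ ‖v‖ ^ 2 / (2 * β) := by
  have h := norm_sub_sq_real v (β • w)
  rw [inner_smul_right, norm_smul, Real.norm_of_nonneg hβ.le] at h
  rw [le_div_iff₀ (by positivity)]
  nlinarith [sq_nonneg ‖v - β • w‖]

end Young

section FirstOrder

variable {F : Type*} [NormedAddCommGroup F] [NormedSpace ℝ F]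

theorem ConvexOn.add_fderiv_sub_le {f : F → ℝ} {f' : F →L[ℝ] ℝ} {a : F}
    (hf : ConvexOn ℝ Set.univ f) (hf' : HasFDerivAt f f' a) (y : F) :
    f a + f' (y - a) ≤ f y := by
  let l : ℝ →ᵃ[ℝ] F := AffineMap.lineMap a y
  have hline : ConvexOn ℝ Set.univ (f ∘ l) := by
    simpa using hf.comp_affineMap l
  have hderiv : HasDerivAt (f ∘ l) (f' (y - a)) 0 := by
    have hl : HasDerivAt l (y - a) 0 := AffineMap.hasDerivAt_lineMap
    exact hf'.comp_hasDerivAt_of_eq 0 hl (by simp [l])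
  have := hline.le_slope_of_hasDerivAt (Set.mem_univ 0) (Set.mem_univ 1) zero_lt_one hderiv
  simp only [slope, sub_zero, inv_one, one_smul, Function.comp_apply, vsub_eq_sub, l,
    AffineMap.lineMap_apply_one, AffineMap.lineMap_apply_zero] at this
  linarith

end FirstOrder

section Gradient

variable {E : Type*} [NormedAddCommGroup E] [InnerProductSpace ℝ E] [CompleteSpace E]

theorem ConvexOn.add_inner_gradient_sub_le {f : E → ℝ} {a : E}
    (hf : ConvexOn ℝ Set.univ f) (hfa : DifferentiableAt ℝ f a) (y : E) :
    f a + ⟪gradient f a, y - a⟫ ≤ f y := by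
  simpa using hf.add_fderiv_sub_le hfa.hasFDerivAt y

theorem add_inner_gradient_sub_add_sq_le {f : E → ℝ} {β : ℝ} {a : E}
    (hf : ConvexOn ℝ Set.univ (fun y => f y - β / 2 * ‖y‖ ^ 2))
    (hfa : DifferentiableAt ℝ f a) (y : E) :
    f a + ⟪gradient f a, y - a⟫ + β / 2 * ‖y - a‖ ^ 2 ≤ f y := by
  have hsq := (hasStrictFDerivAt_norm_sq a).hasFDerivAt.const_mul (β / 2)
  have := hf.add_fderiv_sub_le (hfa.hasFDerivAt.sub hsq) y
  have hexp : ‖y‖ ^ 2 = ‖a‖ ^ 2 + 2 * ⟪a, y - a⟫ + ‖y - a‖ ^ 2 := by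
    simpa using norm_add_sq_real a (y - a)
  simp only [sub_apply, smul_apply, innerSL_apply_apply,
    ← inner_gradient_left, smul_eq_mul, nsmul_eq_mul] at this
  rw [hexp] at this
  linarith

theorem ConvexOn.isGreatest_inner_sub_of_gradient_eq {f : E → ℝ} {x y : E}
    (hf : ConvexOn ℝ Set.univ f) (hfy : DifferentiableAt ℝ f y) (hgrad : gradient f y = x) :
    IsGreatest (Set.range fun z => ⟪z, x⟫ - f z) (⟪y, x⟫ - f y) := by
  refine ⟨⟨y, rfl⟩, ?_⟩
  rintro _ ⟨z, rfl⟩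
  have := hf.add_inner_gradient_sub_le hfy z
  rw [hgrad, inner_sub_right] at this
  dsimp only
  rw [real_inner_comm x z, real_inner_comm x y]
  linarith

theorem conjugate_le_inner_sub_add_norm_sq_div {f : E → ℝ} {β c : ℝ} {x y u : E} (hβ : 0 < β)
    (hf : ConvexOn ℝ Set.univ f) (hsc : ConvexOn ℝ Set.univ (fun z => f z - β / 2 * ‖z‖ ^ 2))
    (hfy : DifferentiableAt ℝ f y) (hfu : DifferentiableAt ℝ f u) (hgrad : gradient f y = x)
    (hc : IsLUB (Set.range fun z => ⟪z, x⟫ - f z) c) :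
    c ≤ ⟪x, u⟫ - f u + ‖gradient f u - x‖ ^ 2 / (2 * β) := by
  have hcy : c = ⟪y, x⟫ - f y := hc.unique (hf.isGreatest_inner_sub_of_gradient_eq hfy hgrad).isLUB
  have hstrong := add_inner_gradient_sub_add_sq_le hsc hfu y
  have hyoung := inner_sub_half_mul_norm_sq_le hβ (x - gradient f u) (y - u)
  rw [inner_sub_left, inner_sub_right] at hyoung
  rw [hcy, real_inner_comm x y, norm_sub_rev (gradient f u) x]
  linarith

end Gradient

theorem theorem2_intermediate_lower_bound_general {D N : ℕ}
    (P : Fin N → Measure (EuclideanSpace ℝ (Fin D)))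
    (α : Fin N → ℝ) (hα : ∀ n, 0 < α n)
    -- candidate potentials ψₙ† and ψ̄ₙ‡ with conjugates ψₙ‡
    (β B : ℝ) (hβ : 0 < β) (hβB : β ≤ B)
    (ψdag ψbd ψd : Fin N → EuclideanSpace ℝ (Fin D) → ℝ)
    (hψbd_conv : ∀ n, ConvexOn ℝ Set.univ (ψbd n))
    (hψbd_diff : ∀ n, Differentiable ℝ (ψbd n))
    (hψbd_sconv : ∀ n, ConvexOn ℝ Set.univ (fun y => ψbd n y - β / 2 * ‖y‖ ^ 2))
    (hψd_conj : ∀ n x, IsLUB (Set.range fun y => ⟪y, x⟫ - ψbd n y) (ψd n x))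
    (hinv1 : ∀ n x, gradient (ψbd n) (gradient (ψd n) x) = x)
    -- regularization parameters
    (lam : ℝ)
    (τ : ℝ)
    (Phat : Measure (EuclideanSpace ℝ (Fin D)))
    -- integrability of the stated integrals
    (hintM1 : ∀ n, Integrable
      (fun x => ⟪x, gradient (ψdag n) x⟫ - ψbd n (gradient (ψdag n) x)) (P n))
    (hintM3 : ∀ n, Integrable
      (fun x => ‖gradient (ψbd n) (gradient (ψdag n) x) - x‖ ^ 2) (P n))
    (hint_d : ∀ n, Integrable (ψd n) (P n))
    -- the regularized objective
    (M : ℝ)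
    (hM : M = (∑ n, α n * ∫ x, (⟪x, gradient (ψdag n) x⟫
          - ψbd n (gradient (ψdag n) x)) ∂(P n))
      + τ * ∫ y, max (∑ n, α n * ψbd n y - ‖y‖ ^ 2 / 2) 0 ∂Phat
      + lam * ∑ n, α n * ∫ x, ‖gradient (ψbd n) (gradient (ψdag n) x) - x‖ ^ 2 ∂(P n)) :
    M ≥ (∑ n, α n * ∫ x, ψd n x ∂(P n))
      + τ * ∫ y, max (∑ n, α n * ψbd n y - ‖y‖ ^ 2 / 2) 0 ∂Phat
      + ∑ n, α n * (lam - B / (2 * β ^ 2)) *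
          ∫ x, ‖gradient (ψbd n) (gradient (ψdag n) x) - x‖ ^ 2 ∂(P n) := by
  set c := B / (2 * β ^ 2)
  have hcoef : ∀ t : ℝ, 0 ≤ t → t / (2 * β) ≤ c * t := fun t ht => by
    have : 1 / (2 * β) ≤ c := by
      rw [div_le_div_iff₀ (by positivity) (by positivity)]
      nlinarith
    calc t / (2 * β) = 1 / (2 * β) * t := by ring
      _ ≤ c * t := by gcongr
  have hpointwise : ∀ n x, ψd n x ≤ ⟪x, gradient (ψdag n) x⟫ - ψbd n (gradient (ψdag n) x)
      + c * ‖gradient (ψbd n) (gradient (ψdag n) x) - x‖ ^ 2 := fun n x =>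
    (conjugate_le_inner_sub_add_norm_sq_div hβ (hψbd_conv n) (hψbd_sconv n) (hψbd_diff n _)
      (hψbd_diff n _) (hinv1 n x) (hψd_conj n x)).trans (add_le_add_right (hcoef _ (sq_nonneg _)) _)
  have hintegral : ∀ n, ∫ x, ψd n x ∂(P n) ≤ ∫ x, (⟪x, gradient (ψdag n) x⟫
      - ψbd n (gradient (ψdag n) x)) ∂(P n)
      + c * ∫ x, ‖gradient (ψbd n) (gradient (ψdag n) x) - x‖ ^ 2 ∂(P n) := fun n => by
    rw [← integral_const_mul, ← integral_add (hintM1 n) ((hintM3 n).const_mul c)]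
    exact integral_mono (hint_d n) ((hintM1 n).add ((hintM3 n).const_mul c)) (hpointwise n)
  rw [ge_iff_le, hM, Finset.mul_sum, add_right_comm, add_right_comm _ _ (∑ n, _),
    ← Finset.sum_add_distrib, ← Finset.sum_add_distrib]
  gcongr ?_ + _
  refine Finset.sum_le_sum fun n _ => ?_
  nlinarith [mul_le_mul_of_nonneg_left (hintegral n) (hα n).le]

/-- Intermediate lower bound (23)–(24) in the proof of Theorem 2: the
regularized objective `M` satisfies
`M ≥ Σₙ αₙ ∫ ψₙ‡ dPₙ + τ ∫ [Σₙ αₙ ψ̄ₙ‡(y) − ‖y‖²/2]₊ dP̂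
  + Σₙ αₙ (λ − B/(2β²)) ∫ ‖∇ψ̄ₙ‡(∇ψₙ†(x)) − x‖² dPₙ`. -/
theorem theorem2_intermediate_lower_bound {D N : ℕ}
    (P : Fin N → Measure (EuclideanSpace ℝ (Fin D)))
    [∀ n, IsProbabilityMeasure (P n)]
    (α : Fin N → ℝ) (hα : ∀ n, 0 < α n) (hαsum : ∑ n, α n = 1)
    -- candidate potentials ψₙ† and ψ̄ₙ‡ with conjugates ψₙ‡
    (β B : ℝ) (hβ : 0 < β) (hβB : β ≤ B)
    (ψdag ψbd ψd : Fin N → EuclideanSpace ℝ (Fin D) → ℝ)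
    (hψdag_conv : ∀ n, ConvexOn ℝ Set.univ (ψdag n))
    (hψdag_diff : ∀ n, Differentiable ℝ (ψdag n))
    (hψbd_conv : ∀ n, ConvexOn ℝ Set.univ (ψbd n))
    (hψbd_diff : ∀ n, Differentiable ℝ (ψbd n))
    (hψbd_sconv : ∀ n, ConvexOn ℝ Set.univ (fun y => ψbd n y - β / 2 * ‖y‖ ^ 2))
    (hψbd_smooth : ∀ n x y, ‖gradient (ψbd n) x - gradient (ψbd n) y‖ ≤ B * ‖x - y‖)
    (hψd_diff : ∀ n, Differentiable ℝ (ψd n))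
    (hψd_conj : ∀ n x, IsLUB (Set.range fun y => ⟪y, x⟫ - ψbd n y) (ψd n x))
    (hψd_lip : ∀ n x y, ‖gradient (ψd n) x - gradient (ψd n) y‖ ≤ (1 / β) * ‖x - y‖)
    (hinv1 : ∀ n x, gradient (ψbd n) (gradient (ψd n) x) = x)
    (hinv2 : ∀ n y, gradient (ψd n) (gradient (ψbd n) y) = y)
    -- regularization parameters
    (lam : ℝ) (hlam : 0 < lam)
    (τ : ℝ) (hτ : 1 ≤ τ)
    (Phat : Measure (EuclideanSpace ℝ (Fin D))) [IsProbabilityMeasure Phat]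
    -- integrability of the stated integrals
    (hintM1 : ∀ n, Integrable
      (fun x => ⟪x, gradient (ψdag n) x⟫ - ψbd n (gradient (ψdag n) x)) (P n))
    (hintM2 : Integrable (fun y => max (∑ n, α n * ψbd n y - ‖y‖ ^ 2 / 2) 0) Phat)
    (hintM3 : ∀ n, Integrable
      (fun x => ‖gradient (ψbd n) (gradient (ψdag n) x) - x‖ ^ 2) (P n))
    (hint_d : ∀ n, Integrable (ψd n) (P n))
    -- the regularized objective
    (M : ℝ)
    (hM : M = (∑ n, α n * ∫ x, (⟪x, gradient (ψdag n) x⟫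
          - ψbd n (gradient (ψdag n) x)) ∂(P n))
      + τ * ∫ y, max (∑ n, α n * ψbd n y - ‖y‖ ^ 2 / 2) 0 ∂Phat
      + lam * ∑ n, α n * ∫ x, ‖gradient (ψbd n) (gradient (ψdag n) x) - x‖ ^ 2 ∂(P n)) :
    M ≥ (∑ n, α n * ∫ x, ψd n x ∂(P n))
      + τ * ∫ y, max (∑ n, α n * ψbd n y - ‖y‖ ^ 2 / 2) 0 ∂Phat
      + ∑ n, α n * (lam - B / (2 * β ^ 2)) *
          ∫ x, ‖gradient (ψbd n) (gradient (ψdag n) x) - x‖ ^ 2 ∂(P n) :=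
  theorem2_intermediate_lower_bound_general P α hα β B hβ hβB ψdag ψbd ψd hψbd_conv hψbd_diff
    hψbd_sconv hψd_conj hinv1 lam τ Phat hintM1 hintM3 hint_d M hM
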